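/- Let n be odd, let f : {0,1}^n → {0,1} be the AND function f(x) = x₁·x₂·…·x_n, let g(x) = 1 − ∏_{i=1}^n (1−x_i) be its dual (the OR function), and let h = Maj_n be the majority function. If the individual preferences are independent and uniformly distributed (i.e., distributed according to D(1/6,1/6,1/6)), then the probability of irrational choice satisfies W(f,g,h) ≤ (2/9)^{n/2}. -/

import Mathlib

/-!
Bound `f g h ≤ f h` and `(1 - f)(1 - g)(1 - h) ≤ (1 - g)(1 - h)`. Summing out `x` and `y`,
AND forces `x = 1` and the failure of OR forces `y = 0`, so a profile `z` with `k` ones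
contributes `3⁻ⁿ 2⁻ᵏ` when `Maj z = 1` and `3⁻ⁿ 2^{k - n}` otherwise. Majority always selects
the smaller of these two weights, which is at most their geometric mean `18^{-n/2}`; summing
over the `2ⁿ` profiles `z` gives `(2/9)^{n/2}`.
-/

open Finset Real

noncomputable section

namespace GSWF

/-- Walsh function `r_S(x) = ∏_{i∈S} (2 x_i - 1)` on the discrete cube. -/
def walsh {n : ℕ} (S : Finset (Fin n)) (x : Fin n → Bool) : ℝ :=
  ∏ i ∈ S, (if x i then (1 : ℝ) else -1)

/-- Fourier–Walsh coefficient `f̂(S) = 2^{-n} ∑_x f(x) r_S(x)`. -/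
def coeff {n : ℕ} (f : (Fin n → Bool) → ℝ) (S : Finset (Fin n)) : ℝ :=
  (∑ x : Fin n → Bool, f x * walsh S x) / 2 ^ n

/-- Expectation under the uniform measure on the discrete cube. -/
def expect {n : ℕ} (f : (Fin n → Bool) → ℝ) : ℝ :=
  (∑ x : Fin n → Bool, f x) / 2 ^ n

/-- Biased inner product `⟨⟨f,g⟩⟩_δ = ∑_{S ≠ ∅} f̂(S) ĝ(S) δ^{|S|}`. -/
def bip {n : ℕ} (δ : ℝ) (f g : (Fin n → Bool) → ℝ) : ℝ :=
  ∑ S ∈ Finset.univ.filter (fun S : Finset (Fin n) => S ≠ ∅),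
    coeff f S * coeff g S * δ ^ S.card

/-- Probability of a single voter's preference triple under `D(α,β,γ)`. -/
def prTriple (α β γ : ℝ) : Bool → Bool → Bool → ℝ
  | true, true, false => α
  | false, false, true => α
  | false, true, true => β
  | true, false, false => β
  | true, false, true => γ
  | false, true, false => γ
  | _, _, _ => 0

/-- Probability of a profile under the even product distribution `D(α,β,γ)`. -/
def prProfile {n : ℕ} (α β γ : ℝ) (x y z : Fin n → Bool) : ℝ :=
  ∏ i, prTriple α β γ (x i) (y i) (z i)

/-- Probability of an irrational outcome `W(f,g,h)` under `D(α,β,γ)`. -/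
def W {n : ℕ} (α β γ : ℝ) (f g h : (Fin n → Bool) → ℝ) : ℝ :=
  ∑ x : Fin n → Bool, ∑ y : Fin n → Bool, ∑ z : Fin n → Bool,
    prProfile α β γ x y z *
      (f x * g y * h z + (1 - f x) * (1 - g y) * (1 - h z))

/-- A real-valued function on the cube that takes only the values 0 and 1. -/
def IsBooleanFn {n : ℕ} (f : (Fin n → Bool) → ℝ) : Prop :=
  ∀ x, f x = 0 ∨ f x = 1

/-- Monotone increasing function on the discrete cube. -/
def MonotoneCube {n : ℕ} (f : (Fin n → Bool) → ℝ) : Prop :=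
  ∀ x y : Fin n → Bool, (∀ i, x i ≤ y i) → f x ≤ f y

/-- Monotone decreasing function on the discrete cube. -/
def AntitoneCube {n : ℕ} (f : (Fin n → Bool) → ℝ) : Prop :=
  ∀ x y : Fin n → Bool, (∀ i, x i ≤ y i) → f y ≤ f x

/-- Invariance under a transitive group of permutations of the coordinates. -/
def TransitiveSymmetric {n : ℕ} (f : (Fin n → Bool) → ℝ) : Prop :=
  ∃ G : Subgroup (Equiv.Perm (Fin n)),
    (∀ i j : Fin n, ∃ σ ∈ G, σ i = j) ∧
    ∀ σ ∈ G, ∀ x : Fin n → Bool, f (x ∘ σ) = f x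

/-- The majority function: 1 iff more than half of the coordinates are 1. -/
def maj (n : ℕ) (x : Fin n → Bool) : ℝ :=
  if n < 2 * (Finset.univ.filter (fun i => x i = true)).card then 1 else 0

/-- The dual function `f'(x) = 1 - f(1-x)`. -/
def dualFn {n : ℕ} (f : (Fin n → Bool) → ℝ) (x : Fin n → Bool) : ℝ :=
  1 - f (fun i => !(x i))

/-- The Bonamie–Beckner noise operator `T_δ`. -/
def Tnoise {n : ℕ} (δ : ℝ) (f : (Fin n → Bool) → ℝ) (x : Fin n → Bool) : ℝ :=
  ∑ S : Finset (Fin n), δ ^ S.card * coeff f S * walsh S x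

/-- The AND function on the discrete cube. -/
def andFn (n : ℕ) (x : Fin n → Bool) : ℝ :=
  if ∀ i, x i = true then 1 else 0

/-- The OR function on the discrete cube (the dual of AND). -/
def orFn (n : ℕ) (x : Fin n → Bool) : ℝ :=
  if ∃ i, x i = true then 1 else 0

lemma pow_mul_pow_le_pow_mul_pow {R : Type*} [CommSemiring R] [PartialOrder R] [IsOrderedRing R]
    {p q : R} (hp : 0 ≤ p) (hpq : p ≤ q) {j k : ℕ} (hjk : j ≤ k) :
    p ^ k * q ^ j ≤ q ^ k * p ^ j := by
  obtain ⟨d, rfl⟩ := exists_add_of_le hjk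
  calc p ^ (j + d) * q ^ j = p ^ j * q ^ j * p ^ d := by ring
    _ ≤ p ^ j * q ^ j * q ^ d :=
        mul_le_mul_of_nonneg_left (pow_le_pow_left₀ hp hpq d) (by positivity [hp.trans hpq])
    _ = q ^ (j + d) * p ^ j := by ring

lemma prod_ite_bool_eq_pow_mul_pow {M : Type*} [CommMonoid M] {n : ℕ} (p q : M)
    (z : Fin n → Bool) :
    ∏ i, (if z i then p else q) = p ^ #{i | z i} * q ^ (n - #{i | z i}) := by
  rw [prod_ite, prod_const, prod_const]
  congr 2
  have := card_filter_add_card_filter_not (s := univ) fun i : Fin n => z i = true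
  simp only [card_univ, Fintype.card_fin] at this
  omega

lemma sqrt_pow_of_nonneg {x : ℝ} (hx : 0 ≤ x) (n : ℕ) : √(x ^ n) = √x ^ n := by
  rw [Real.sqrt_eq_iff_eq_sq (by positivity) (by positivity), ← pow_mul, mul_comm, pow_mul,
    Real.sq_sqrt hx]

lemma le_sqrt_mul_of_le {a b : ℝ} (ha : 0 ≤ a) (hab : a ≤ b) : a ≤ √(a * b) :=
  (Real.le_sqrt ha (mul_nonneg ha (ha.trans hab))).2 (by nlinarith)

lemma andFn_isBooleanFn (n : ℕ) : IsBooleanFn (andFn n) := fun x => by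
  unfold andFn; split_ifs <;> simp

lemma orFn_isBooleanFn (n : ℕ) : IsBooleanFn (orFn n) := fun x => by
  unfold orFn; split_ifs <;> simp

lemma maj_isBooleanFn (n : ℕ) : IsBooleanFn (maj n) := fun x => by
  unfold maj; split_ifs <;> simp

section Profiles

variable {n : ℕ} {α β γ : ℝ}

lemma prTriple_nonneg (hα : 0 ≤ α) (hβ : 0 ≤ β) (hγ : 0 ≤ γ) (a b c : Bool) :
    0 ≤ prTriple α β γ a b c := by
  cases a <;> cases b <;> cases c <;> simp [prTriple, *]

lemma prProfile_nonneg (hα : 0 ≤ α) (hβ : 0 ≤ β) (hγ : 0 ≤ γ) (x y z : Fin n → Bool) :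
    0 ≤ prProfile α β γ x y z :=
  prod_nonneg fun _ _ => prTriple_nonneg hα hβ hγ _ _ _

lemma sum_prProfile_left (y z : Fin n → Bool) :
    ∑ x, prProfile α β γ x y z = ∏ i, ∑ a, prTriple α β γ a (y i) (z i) :=
  (Fintype.prod_sum fun i a => prTriple α β γ a (y i) (z i)).symm

lemma sum_prProfile_middle (x z : Fin n → Bool) :
    ∑ y, prProfile α β γ x y z = ∏ i, ∑ b, prTriple α β γ (x i) b (z i) :=
  (Fintype.prod_sum fun i b => prTriple α β γ (x i) b (z i)).symm

lemma W_le_of_isBooleanFn (hα : 0 ≤ α) (hβ : 0 ≤ β) (hγ : 0 ≤ γ)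
    {f g h : (Fin n → Bool) → ℝ} (hf : IsBooleanFn f) (hg : IsBooleanFn g)
    (hh : IsBooleanFn h) :
    W α β γ f g h ≤ ∑ x, ∑ y, ∑ z,
      prProfile α β γ x y z * (f x * h z + (1 - g y) * (1 - h z)) := by
  refine sum_le_sum fun x _ => sum_le_sum fun y _ => sum_le_sum fun z _ => ?_
  refine mul_le_mul_of_nonneg_left ?_ (prProfile_nonneg hα hβ hγ x y z)
  rcases hf x with hx | hx <;> rcases hg y with hy | hy <;> rcases hh z with hz | hz <;>
    norm_num [hx, hy, hz]

lemma andFn_eq_ite (x : Fin n → Bool) : andFn n x = if x = fun _ => true then 1 else 0 := by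
  simp [andFn, funext_iff]

lemma one_sub_orFn_eq_ite (y : Fin n → Bool) :
    1 - orFn n y = if y = fun _ => false then 1 else 0 := by
  by_cases hy : ∃ i, y i = true <;> simp_all [orFn, funext_iff]

lemma sum_sum_prProfile_mul_andFn (z : Fin n → Bool) :
    ∑ x, ∑ y, prProfile α β γ x y z * andFn n x = ∏ i, if z i then γ else α + β := by
  simp_rw [← sum_mul, sum_prProfile_middle, andFn_eq_ite, mul_ite, mul_one, mul_zero,
    sum_ite_eq', mem_univ, if_true]
  refine prod_congr rfl fun i _ => ?_
  cases z i <;> simp [prTriple]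

lemma sum_sum_prProfile_mul_one_sub_orFn (z : Fin n → Bool) :
    ∑ x, ∑ y, prProfile α β γ x y z * (1 - orFn n y) = ∏ i, if z i then α + γ else β := by
  rw [sum_comm]
  simp_rw [← sum_mul, sum_prProfile_left, one_sub_orFn_eq_ite, mul_ite, mul_one, mul_zero,
    sum_ite_eq', mem_univ, if_true]
  refine prod_congr rfl fun i _ => ?_
  cases z i <;> simp [prTriple, add_comm]

lemma W_andFn_orFn_le (hα : 0 ≤ α) (hβ : 0 ≤ β) (hγ : 0 ≤ γ)
    {h : (Fin n → Bool) → ℝ} (hh : IsBooleanFn h) :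
    W α β γ (andFn n) (orFn n) h ≤ ∑ z, (h z * ∏ i, (if z i then γ else α + β)
      + (1 - h z) * ∏ i, (if z i then α + γ else β)) := by
  refine (W_le_of_isBooleanFn hα hβ hγ (andFn_isBooleanFn n) (orFn_isBooleanFn n)
    hh).trans_eq ?_
  simp_rw [← sum_sum_prProfile_mul_andFn, ← sum_sum_prProfile_mul_one_sub_orFn, mul_sum,
    ← sum_add_distrib]
  refine ((sum_congr rfl fun x _ => sum_comm).trans sum_comm).trans ?_
  exact sum_congr rfl fun z _ => sum_congr rfl fun x _ => sum_congr rfl fun y _ => by ring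

end Profiles

lemma maj_mul_add_one_sub_maj_mul_le {n : ℕ} {p q : ℝ} (hp : 0 ≤ p) (hpq : p ≤ q)
    (z : Fin n → Bool) :
    maj n z * ∏ i, (if z i then p else q) + (1 - maj n z) * ∏ i, (if z i then q else p)
      ≤ √(p * q) ^ n := by
  have hq : 0 ≤ q := hp.trans hpq
  have hprod : (∏ i, (if z i then p else q)) * ∏ i, (if z i then q else p) = (p * q) ^ n := by
    rw [← prod_mul_distrib, show (p * q) ^ n = ∏ _i : Fin n, p * q by simp]
    exact prod_congr rfl fun i _ => by cases z i <;> simp [mul_comm]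
  rw [← sqrt_pow_of_nonneg (mul_nonneg hp hq), ← hprod, prod_ite_bool_eq_pow_mul_pow,
    prod_ite_bool_eq_pow_mul_pow]
  set k := #{i | z i}
  unfold maj
  split_ifs with hmaj
  · rw [one_mul, sub_self, zero_mul, add_zero]
    exact le_sqrt_mul_of_le (by positivity) (pow_mul_pow_le_pow_mul_pow hp hpq (by omega))
  · rw [zero_mul, sub_zero, one_mul, zero_add, mul_comm (p ^ k * _)]
    refine le_sqrt_mul_of_le (by positivity) ?_
    calc q ^ k * p ^ (n - k) = p ^ (n - k) * q ^ k := mul_comm _ _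
      _ ≤ q ^ (n - k) * p ^ k := pow_mul_pow_le_pow_mul_pow hp hpq (by omega)
      _ = p ^ k * q ^ (n - k) := mul_comm _ _

theorem and_or_majority_irrationality_general {n : ℕ} :
    W (1 / 6) (1 / 6) (1 / 6) (andFn n) (orFn n) (maj n) ≤
      ((2 : ℝ) / 9) ^ ((n : ℝ) / 2) := by
  calc W (1 / 6) (1 / 6) (1 / 6) (andFn n) (orFn n) (maj n)
      ≤ ∑ z, (maj n z * ∏ i, (if z i then 1 / 6 else 1 / 6 + 1 / 6)
          + (1 - maj n z) * ∏ i, (if z i then 1 / 6 + 1 / 6 else 1 / 6)) :=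
        W_andFn_orFn_le (by norm_num) (by norm_num) (by norm_num) (maj_isBooleanFn n)
    _ ≤ ∑ _z : Fin n → Bool, √(1 / 6 * (1 / 6 + 1 / 6)) ^ n :=
        sum_le_sum fun z _ => maj_mul_add_one_sub_maj_mul_le (by norm_num) (by norm_num) z
    _ = (2 * √(1 / 6 * (1 / 6 + 1 / 6))) ^ n := by
        rw [sum_const, card_univ, Fintype.card_fun, Fintype.card_bool, Fintype.card_fin,
          nsmul_eq_mul, mul_pow, Nat.cast_pow, Nat.cast_ofNat]
    _ = √(2 / 9) ^ n := by
        congr 1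
        rw [eq_comm, Real.sqrt_eq_iff_eq_sq (by norm_num) (by positivity), mul_pow,
          Real.sq_sqrt (by norm_num)]
        norm_num
    _ = ((2 : ℝ) / 9) ^ ((n : ℝ) / 2) := by
        rw [Real.sqrt_eq_rpow, ← Real.rpow_natCast, ← Real.rpow_mul (by norm_num)]
        ring_nf

/-- for odd `n`, the GSWF with choice functions AND, OR, and
majority, with uniform preferences, satisfies `W(f,g,h) ≤ (2/9)^{n/2}`. -/
theorem and_or_majority_irrationality {n : ℕ} (hodd : Odd n) :
    W (1 / 6) (1 / 6) (1 / 6) (andFn n) (orFn n) (maj n) ≤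
      ((2 : ℝ) / 9) ^ ((n : ℝ) / 2) :=
  and_or_majority_irrationality_general

end GSWF
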